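/- arXiv:1903.04133 — 5 statements merged into one kernel-verified Lean document; each statement's English description precedes it below -/
import Mathlib

section
/- Let E be a real normed space, M ≥ 0, and let h, δ, q, Ψ : ℕ → ℝ and d : ℕ → E be sequences (indexed from 1) such that: (i) h(k+1) ≥ h(k) + δ(k) + q(k) for all k ≥ 1; (ii) 0 ≤ h(k) ≤ M for all k ≥ 1; (iii) Ψ(k) > 0 for all k; (iv) there exists a strictly increasing function m : ℕ → ℕ with m(0) = 0 such that for every j, Σ_{k = m(j)+1}^{m(j+1)} Ψ(k)·‖d(k)‖² ≤ Σ_{k = m(j)+1}^{m(j+1)} ( δ(k) + q(k) ). Then for every n ≥ 1, Σ_{k=1}^{n} Ψ(k)·‖d(k)‖² ≤ M. (This is the bound (21), Σ_k Ψ_{i,k}‖d_{i,k}‖² ≤ |B̄_i|·H_UB, established in the proof of Theorem 1 of the paper.) -/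
open Finset

theorem sum_Icc_one_le_sub_of_add_le_succ {α : Type*} [AddCommGroup α] [PartialOrder α]
    [IsOrderedAddMonoid α] {h a : ℕ → α} (hstep : ∀ k ≥ 1, h k + a k ≤ h (k + 1)) (N : ℕ) :
    ∑ k ∈ Icc 1 N, a k ≤ h (N + 1) - h 1 := by
  induction N with
  | zero => simp
  | succ N ih =>
    rw [sum_Icc_succ_top (Nat.le_add_left 1 N)]
    calc ∑ k ∈ Icc 1 N, a k + a (N + 1) ≤ h (N + 1) - h 1 + a (N + 1) := add_le_add_left ih _
      _ ≤ h (N + 1 + 1) - h 1 := by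
        rw [sub_add_eq_add_sub]
        exact sub_le_sub_right (hstep (N + 1) (Nat.le_add_left 1 N)) _

theorem sum_Icc_le_sum_Icc_of_forall_window {α : Type*} [AddCommMonoid α] [PartialOrder α]
    [IsOrderedAddMonoid α] {f g : ℕ → α} {m : ℕ → ℕ} (hm : Monotone m)
    (hwin : ∀ j, ∑ k ∈ Icc (m j + 1) (m (j + 1)), f k ≤ ∑ k ∈ Icc (m j + 1) (m (j + 1)), g k)
    (J : ℕ) : ∑ k ∈ Icc (m 0 + 1) (m J), f k ≤ ∑ k ∈ Icc (m 0 + 1) (m J), g k := by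
  simp only [Icc_add_one_left_eq_Ioc] at hwin ⊢
  induction J with
  | zero => simp
  | succ J ih =>
    rw [← sum_Ioc_consecutive f (hm J.zero_le) (hm J.le_succ),
      ← sum_Ioc_consecutive g (hm J.zero_le) (hm J.le_succ)]
    exact add_le_add ih (hwin J)

theorem partial_sum_bound_general {E : Type*} [NormedAddCommGroup E]
    (M : ℝ) (h δ q Ψ : ℕ → ℝ) (d : ℕ → E)
    (hstep : ∀ k ≥ 1, h (k + 1) ≥ h k + δ k + q k)
    (hbd : ∀ k ≥ 1, 0 ≤ h k ∧ h k ≤ M)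
    (hΨ : ∀ k, 0 < Ψ k)
    (m : ℕ → ℕ) (hm : StrictMono m) (hm0 : m 0 = 0)
    (hwin : ∀ j : ℕ, ∑ k ∈ Finset.Icc (m j + 1) (m (j + 1)), Ψ k * ‖d k‖ ^ 2
        ≤ ∑ k ∈ Finset.Icc (m j + 1) (m (j + 1)), (δ k + q k)) :
    ∀ n ≥ 1, ∑ k ∈ Finset.Icc 1 n, Ψ k * ‖d k‖ ^ 2 ≤ M := by
  intro n _
  have hwindows := sum_Icc_le_sum_Icc_of_forall_window hm.monotone hwin n
  rw [hm0, zero_add] at hwindows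
  have htele : ∑ k ∈ Icc 1 (m n), (δ k + q k) ≤ h (m n + 1) - h 1 :=
    sum_Icc_one_le_sub_of_add_le_succ (fun k hk => by linarith [hstep k hk]) (m n)
  calc ∑ k ∈ Icc 1 n, Ψ k * ‖d k‖ ^ 2
      ≤ ∑ k ∈ Icc 1 (m n), Ψ k * ‖d k‖ ^ 2 :=
        sum_le_sum_of_subset_of_nonneg (Icc_subset_Icc_right hm.le_apply)
          fun k _ _ => mul_nonneg (hΨ k).le (sq_nonneg _)
    _ ≤ h (m n + 1) - h 1 := hwindows.trans htele
    _ ≤ M := by linarith [(hbd 1 le_rfl).1, (hbd (m n + 1) (Nat.le_add_left 1 (m n))).2]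

/-- The bound (21) in the proof of Theorem 1 of the paper:
`Σ_k Ψ_{i,k} ‖d_{i,k}‖² ≤ |B̄_i| · H_UB`. -/
theorem partial_sum_bound {E : Type*} [NormedAddCommGroup E]
    (M : ℝ) (hM : 0 ≤ M) (h δ q Ψ : ℕ → ℝ) (d : ℕ → E)
    (hstep : ∀ k ≥ 1, h (k + 1) ≥ h k + δ k + q k)
    (hbd : ∀ k ≥ 1, 0 ≤ h k ∧ h k ≤ M)
    (hΨ : ∀ k, 0 < Ψ k)
    (m : ℕ → ℕ) (hm : StrictMono m) (hm0 : m 0 = 0)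
    (hwin : ∀ j : ℕ, ∑ k ∈ Finset.Icc (m j + 1) (m (j + 1)), Ψ k * ‖d k‖ ^ 2
        ≤ ∑ k ∈ Finset.Icc (m j + 1) (m (j + 1)), (δ k + q k)) :
    ∀ n ≥ 1, ∑ k ∈ Finset.Icc 1 n, Ψ k * ‖d k‖ ^ 2 ≤ M :=
  partial_sum_bound_general M h δ q Ψ d hstep hbd hΨ m hm hm0 hwin
end

section
/- Let E be a real normed space, M ≥ 0, ψ > 0, and let h, δ, q, Ψ : ℕ → ℝ and d : ℕ → E be sequences (indexed from 1) such that: (i) h(k+1) ≥ h(k) + δ(k) + q(k) for all k ≥ 1; (ii) 0 ≤ h(k) ≤ M for all k ≥ 1; (iii) Ψ(k) ≥ ψ for all k; (iv) there exists a strictly increasing function m : ℕ → ℕ with m(0) = 0 such that for every j, 0 ≤ Σ_{k = m(j)+1}^{m(j+1)} Ψ(k)·‖d(k)‖² ≤ Σ_{k = m(j)+1}^{m(j+1)} ( δ(k) + q(k) ). Then lim_{k → ∞} d(k) = 0. (Theorem 1 of the paper: under Assumptions 1–4, the optimal variable step size (13) guarantees the convergence criterion lim_{k→∞} d_{i,k}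 = 0 for every agent i whose extended neighborhood is entirely in normal mode.) -/
/-!
Summing the ascent inequality `h (k + 1) ≥ h k + δ k + q k` over a window telescopes, so the
window hypothesis bounds `∑ Ψ k * ‖d k‖ ^ 2` over all windows from `m 0` on by the range `M` of
`h`. The series of nonnegative terms `Ψ k * ‖d k‖ ^ 2` therefore converges, its terms tend to `0`,
and `Ψ ≥ ψ > 0` turns this into `d k → 0`.
-/

open Finset Filter Topology

section Telescoping

variable {α : Type*} [AddCommGroup α] [PartialOrder α] [IsOrderedAddMonoid α]

theorem sum_Ioc_le_sub_of_forall_le_sub {f g : ℕ → α} {m : ℕ → ℕ} (hm : Monotone m) {i J : ℕ}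
    (hiJ : i ≤ J) (hblock : ∀ j ∈ Ico i J, ∑ k ∈ Ioc (m j) (m (j + 1)), f k ≤ g (j + 1) - g j) :
    ∑ k ∈ Ioc (m i) (m J), f k ≤ g J - g i := by
  induction J, hiJ using Nat.le_induction with
  | base => simp
  | succ J hiJ ih =>
    rw [← sum_Ioc_consecutive f (hm hiJ) (hm J.le_succ)]
    have hprev := ih fun j hj => hblock j (Ico_subset_Ico_right J.le_succ hj)
    have hlast := hblock J (mem_Ico.2 ⟨hiJ, J.lt_succ_self⟩)
    calc _ ≤ (g J - g i) + (g (J + 1) - g J) := add_le_add hprev hlast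
      _ = g (J + 1) - g i := by abel

end Telescoping

theorem summable_of_sum_Ioc_le {a : ℕ → ℝ} (ha : ∀ k, 0 ≤ a k) {m : ℕ → ℕ} (hm : StrictMono m)
    {N : ℕ} {C : ℝ} (hbound : ∀ J, ∑ k ∈ Ioc N (m J), a k ≤ C) : Summable a := by
  refine summable_of_sum_range_le ha (c := ∑ k ∈ range (N + 1), a k + C) fun n => ?_
  have hdisj : Disjoint (range (N + 1)) (Ioc N (m n)) :=
    disjoint_left.2 fun k hk hk' => by simp only [mem_range, mem_Ioc] at hk hk'; omega
  have hsub : range n ⊆ range (N + 1) ∪ Ioc N (m n) := fun k hk => by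
    have := hm.le_apply (x := n)
    simp only [mem_union, mem_range, mem_Ioc] at hk ⊢
    omega
  calc ∑ k ∈ range n, a k ≤ ∑ k ∈ range (N + 1) ∪ Ioc N (m n), a k :=
        sum_le_sum_of_subset_of_nonneg hsub fun k _ _ => ha k
    _ = ∑ k ∈ range (N + 1), a k + ∑ k ∈ Ioc N (m n), a k := sum_union hdisj
    _ ≤ ∑ k ∈ range (N + 1), a k + C := by gcongr; exact hbound n

theorem tendsto_zero_of_mul_norm_sq {ι E : Type*} [SeminormedAddCommGroup E] {l : Filter ι}
    {ψ : ℝ} (hψ : 0 < ψ) {Ψ : ι → ℝ} (hΨ : ∀ k, ψ ≤ Ψ k) {d : ι → E}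
    (h : Tendsto (fun k => Ψ k * ‖d k‖ ^ 2) l (𝓝 0)) : Tendsto d l (𝓝 0) := by
  have hsq : Tendsto (fun k => ‖d k‖ ^ 2) l (𝓝 0) := by
    refine squeeze_zero (fun k => sq_nonneg _) (fun k => ?_) (by simpa using h.div_const ψ)
    rw [le_div_iff₀ hψ, mul_comm]
    exact mul_le_mul_of_nonneg_right (hΨ k) (sq_nonneg _)
  refine tendsto_zero_iff_norm_tendsto_zero.2 ?_
  simpa [Real.sqrt_sq (norm_nonneg _)] using hsq.sqrt

theorem gradient_converges_to_zero_general {E : Type*} [NormedAddCommGroup E]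
    (M : ℝ) (ψ : ℝ) (hψ : 0 < ψ)
    (h δ q Ψ : ℕ → ℝ) (d : ℕ → E)
    (hstep : ∀ k ≥ 1, h (k + 1) ≥ h k + δ k + q k)
    (hbd : ∀ k ≥ 1, 0 ≤ h k ∧ h k ≤ M)
    (hΨ : ∀ k, ψ ≤ Ψ k)
    (m : ℕ → ℕ) (hm : StrictMono m)
    (hwin : ∀ j : ℕ,
      0 ≤ ∑ k ∈ Finset.Icc (m j + 1) (m (j + 1)), Ψ k * ‖d k‖ ^ 2 ∧
      ∑ k ∈ Finset.Icc (m j + 1) (m (j + 1)), Ψ k * ‖d k‖ ^ 2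
        ≤ ∑ k ∈ Finset.Icc (m j + 1) (m (j + 1)), (δ k + q k)) :
    Tendsto d atTop (nhds 0) := by
  have hnonneg : ∀ k, 0 ≤ Ψ k * ‖d k‖ ^ 2 :=
    fun k => mul_nonneg (hψ.le.trans (hΨ k)) (sq_nonneg _)
  have hblock : ∀ j, ∑ k ∈ Ioc (m j) (m (j + 1)), Ψ k * ‖d k‖ ^ 2
      ≤ h (m (j + 1) + 1) - h (m j + 1) := fun j => by
    have hwin_j := (hwin j).2
    simp only [Icc_add_one_left_eq_Ioc] at hwin_j
    refine hwin_j.trans (sum_Ioc_le_sub_of_forall_le_sub (g := fun k => h (k + 1)) monotone_id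
      (hm.monotone j.le_succ) fun k _ => ?_)
    simp only [id, Nat.Ioc_succ_singleton, sum_singleton]
    linarith [hstep (k + 1) (by omega)]
  have hbound : ∀ J, ∑ k ∈ Ioc (m 0) (m J), Ψ k * ‖d k‖ ^ 2 ≤ M := fun J =>
    (sum_Ioc_le_sub_of_forall_le_sub (g := fun j => h (m j + 1)) hm.monotone J.zero_le
      fun j _ => hblock j).trans
      (by linarith [(hbd (m J + 1) (by omega)).2, (hbd (m 0 + 1) (by omega)).1])
  exact tendsto_zero_of_mul_norm_sq hψ hΨ
    (summable_of_sum_Ioc_le hnonneg hm hbound).tendsto_atTop_zero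

/-- Theorem 1 of the paper: under Assumptions 1–4 the optimal variable step
size guarantees `lim_{k→∞} d_{i,k} = 0`. -/
theorem gradient_converges_to_zero {E : Type*} [NormedAddCommGroup E]
    (M : ℝ) (hM : 0 ≤ M) (ψ : ℝ) (hψ : 0 < ψ)
    (h δ q Ψ : ℕ → ℝ) (d : ℕ → E)
    (hstep : ∀ k ≥ 1, h (k + 1) ≥ h k + δ k + q k)
    (hbd : ∀ k ≥ 1, 0 ≤ h k ∧ h k ≤ M)
    (hΨ : ∀ k, ψ ≤ Ψ k)
    (m : ℕ → ℕ) (hm : StrictMono m) (hm0 : m 0 = 0)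
    (hwin : ∀ j : ℕ,
      0 ≤ ∑ k ∈ Finset.Icc (m j + 1) (m (j + 1)), Ψ k * ‖d k‖ ^ 2 ∧
      ∑ k ∈ Finset.Icc (m j + 1) (m (j + 1)), Ψ k * ‖d k‖ ^ 2
        ≤ ∑ k ∈ Finset.Icc (m j + 1) (m (j + 1)), (δ k + q k)) :
    Tendsto d atTop (nhds 0) :=
  gradient_converges_to_zero_general M ψ hψ h δ q Ψ d hstep hbd hΨ m hm hwin
end

section
/- Let E be a real normed space, M ≥ 0, ψ > 0. Let σ : ℕ → Prop be a decidable predicate (σ(k) meaning the agent is in boosting mode at step k), let d, d̂ : ℕ → E be two sequences, and define the effective update direction e(k) = d̂(k) if σ(k) holds and e(k) = d(k) otherwise. Let h, δ, q, Ψ : ℕ → ℝ satisfy: (i) h(k+1) ≥ h(k) + δ(k) + q(k) for all k ≥ 1; (ii) 0 ≤ h(k) ≤ M for all k ≥ 1; (iii) Ψ(k) ≥ ψ for all k; (iv) there exists a strictly increasing function m : ℕ → ℕ with m(0) = 0 such that for every j, 0 ≤ Σ_{k = m(j)+1}^{m(j+1)} Ψ(k)·‖e(k)‖² ≤ Σ_{k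 = m(j)+1}^{m(j+1)} ( δ(k) + q(k) ). Then Σ_{k=1}^{n} Ψ(k)·‖e(k)‖² ≤ M for every n, and lim_{k → ∞} e(k) = 0; in particular d(k) → 0 along the steps where σ(k) fails (normal mode) and d̂(k) → 0 along the steps where σ(k) holds (boosting mode). (Theorem 2 of the paper, via the bound (22): Σ_k Ψ_{i,k}[1_{i∈N}‖d_{i,k}‖² + 1_{i∈B}‖d̂_{i,k}‖²] ≤ |B̄_i|·H_UB.) -/
/-!
Telescoping (i) between times `1` and `n + 1` and using (ii) bounds the partial sums of
`δ + q` by `M`. By (iv) the partial sums of the nonnegative weights `Ψ k * ‖e k‖ ^ 2` are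
dominated by those of `δ + q` at the block ends `m j`, and since `m` is unbounded this bounds
every partial sum by `M`. Hence the series converges, its terms tend to zero, and `Ψ ≥ ψ > 0`
forces `‖e k‖ → 0`.
-/

open Finset Filter Topology

section OrderedMonoid

variable {α : Type*} [AddCommMonoid α] [PartialOrder α] [IsOrderedAddMonoid α]

theorem add_sum_Ioc_le_of_add_le_succ {h g : ℕ → α} {a : ℕ}
    (hstep : ∀ k, a < k → h k + g k ≤ h (k + 1)) {n : ℕ} (han : a ≤ n) :
    h (a + 1) + ∑ k ∈ Ioc a n, g k ≤ h (n + 1) := by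
  induction n, han using Nat.le_induction with
  | base => simp
  | succ n han ih =>
    rw [sum_Ioc_succ_top han, ← add_assoc]
    exact (add_le_add_left ih _).trans (hstep (n + 1) (Nat.lt_succ_of_le han))

theorem sum_Ioc_le_sum_Ioc_of_blocks {f g : ℕ → α} {m : ℕ → ℕ} (hm : Monotone m)
    (hblock : ∀ j, ∑ k ∈ Ioc (m j) (m (j + 1)), f k ≤ ∑ k ∈ Ioc (m j) (m (j + 1)), g k)
    (j : ℕ) : ∑ k ∈ Ioc (m 0) (m j), f k ≤ ∑ k ∈ Ioc (m 0) (m j), g k := by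
  induction j with
  | zero => simp
  | succ j ih =>
    have hsplit := fun u : ℕ → α =>
      sum_Ioc_consecutive u (hm (Nat.zero_le j)) (hm j.le_succ)
    rw [← hsplit f, ← hsplit g]
    exact add_le_add ih (hblock j)

theorem sum_Ioc_le_of_blocks {f g : ℕ → α} {m : ℕ → ℕ} (hm : StrictMono m) (hm0 : m 0 = 0)
    (hf : ∀ k, 0 ≤ f k)
    (hblock : ∀ j, ∑ k ∈ Ioc (m j) (m (j + 1)), f k ≤ ∑ k ∈ Ioc (m j) (m (j + 1)), g k)
    {C : α} (hg : ∀ n, ∑ k ∈ Ioc 0 n, g k ≤ C) (n : ℕ) : ∑ k ∈ Ioc 0 n, f k ≤ C :=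
  calc ∑ k ∈ Ioc 0 n, f k
      ≤ ∑ k ∈ Ioc 0 (m n), f k :=
        sum_le_sum_of_subset_of_nonneg (Ioc_subset_Ioc_right hm.le_apply)
          fun k _ _ => hf k
    _ ≤ ∑ k ∈ Ioc 0 (m n), g k := hm0 ▸ sum_Ioc_le_sum_Ioc_of_blocks hm.monotone hblock n
    _ ≤ C := hg (m n)

end OrderedMonoid

theorem tendsto_zero_of_sum_Ioc_le {f : ℕ → ℝ} {C : ℝ} (hf : ∀ k, 0 ≤ f k)
    (hC : ∀ n, ∑ k ∈ Ioc 0 n, f k ≤ C) : Tendsto f atTop (𝓝 0) := by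
  have hshift : Summable fun k => f (k + 1) :=
    summable_of_sum_range_le (c := C) (fun k => hf (k + 1)) fun n => by
      rw [range_eq_Ico, sum_Ico_add', Ico_add_one_right_eq_Icc, Icc_add_one_left_eq_Ioc]
      exact hC n
  exact ((summable_nat_add_iff 1).mp hshift).tendsto_atTop_zero

theorem tendsto_zero_of_weight_mul_sq_norm {ι E : Type*} [SeminormedAddCommGroup E]
    {l : Filter ι} {e : ι → E} {Ψ : ι → ℝ} {ψ : ℝ} (hψ : 0 < ψ) (hΨ : ∀ k, ψ ≤ Ψ k)
    (h : Tendsto (fun k => Ψ k * ‖e k‖ ^ 2) l (𝓝 0)) : Tendsto e l (𝓝 0) := by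
  have hsq : Tendsto (fun k => ‖e k‖ ^ 2) l (𝓝 0) := by
    refine squeeze_zero (fun k => sq_nonneg _) (fun k => ?_) (by simpa using h.div_const ψ)
    rw [le_div_iff₀ hψ, mul_comm]
    exact mul_le_mul_of_nonneg_right (hΨ k) (sq_nonneg _)
  refine tendsto_zero_iff_norm_tendsto_zero.mpr ?_
  simpa [Real.sqrt_sq (norm_nonneg _)] using hsq.sqrt

theorem boosted_gradient_converges_to_zero_general {E : Type*} [NormedAddCommGroup E]
    (M : ℝ) (ψ : ℝ) (hψ : 0 < ψ)
    (σ : ℕ → Prop) [DecidablePred σ] (d dhat : ℕ → E)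
    (e : ℕ → E) (he : ∀ k, e k = if σ k then dhat k else d k)
    (h δ q Ψ : ℕ → ℝ)
    (hstep : ∀ k ≥ 1, h (k + 1) ≥ h k + δ k + q k)
    (hbd : ∀ k ≥ 1, 0 ≤ h k ∧ h k ≤ M)
    (hΨ : ∀ k, ψ ≤ Ψ k)
    (m : ℕ → ℕ) (hm : StrictMono m) (hm0 : m 0 = 0)
    (hwin : ∀ j : ℕ,
      0 ≤ ∑ k ∈ Finset.Icc (m j + 1) (m (j + 1)), Ψ k * ‖e k‖ ^ 2 ∧
      ∑ k ∈ Finset.Icc (m j + 1) (m (j + 1)), Ψ k * ‖e k‖ ^ 2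
        ≤ ∑ k ∈ Finset.Icc (m j + 1) (m (j + 1)), (δ k + q k)) :
    (∀ n : ℕ, ∑ k ∈ Finset.Icc 1 n, Ψ k * ‖e k‖ ^ 2 ≤ M) ∧
    Tendsto e atTop (nhds 0) ∧
    (∀ ε > (0 : ℝ), ∃ N : ℕ, ∀ k ≥ N,
      (¬ σ k → ‖d k‖ < ε) ∧ (σ k → ‖dhat k‖ < ε)) := by
  have hgain : ∀ n, ∑ k ∈ Ioc 0 n, (δ k + q k) ≤ M := fun n => by
    have := add_sum_Ioc_le_of_add_le_succ (h := h) (g := fun k => δ k + q k)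
      (fun k hk => (add_assoc _ _ _).symm.trans_le (hstep k hk)) n.zero_le
    linarith [(hbd 1 le_rfl).1, (hbd (n + 1) n.succ_pos).2]
  have hnonneg : ∀ k, 0 ≤ Ψ k * ‖e k‖ ^ 2 := fun k =>
    mul_nonneg (hψ.le.trans (hΨ k)) (sq_nonneg _)
  have hsum : ∀ n, ∑ k ∈ Ioc 0 n, Ψ k * ‖e k‖ ^ 2 ≤ M :=
    sum_Ioc_le_of_blocks hm hm0 hnonneg
      (fun j => by simpa only [Icc_add_one_left_eq_Ioc] using (hwin j).2) hgain
  have he0 : Tendsto e atTop (𝓝 0) :=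
    tendsto_zero_of_weight_mul_sq_norm hψ hΨ (tendsto_zero_of_sum_Ioc_le hnonneg hsum)
  refine ⟨fun n => (Icc_add_one_left_eq_Ioc 0 n).symm ▸ hsum n, he0, fun ε hε => ?_⟩
  obtain ⟨N, hN⟩ := eventually_atTop.mp
    ((tendsto_zero_iff_norm_tendsto_zero.mp he0).eventually (gt_mem_nhds hε))
  refine ⟨N, fun k hk => ⟨fun hσ => ?_, fun hσ => ?_⟩⟩ <;> simpa [he k, hσ] using hN k hk

/-- Theorem 2 of the paper, via the bound (22): the effective (normal or
boosted) update direction satisfies the partial-sum bound and converges to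
zero; in particular the normal gradient vanishes along normal-mode steps and
the boosted gradient vanishes along boosting-mode steps. -/
theorem boosted_gradient_converges_to_zero {E : Type*} [NormedAddCommGroup E]
    (M : ℝ) (hM : 0 ≤ M) (ψ : ℝ) (hψ : 0 < ψ)
    (σ : ℕ → Prop) [DecidablePred σ] (d dhat : ℕ → E)
    (e : ℕ → E) (he : ∀ k, e k = if σ k then dhat k else d k)
    (h δ q Ψ : ℕ → ℝ)
    (hstep : ∀ k ≥ 1, h (k + 1) ≥ h k + δ k + q k)
    (hbd : ∀ k ≥ 1, 0 ≤ h k ∧ h k ≤ M)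
    (hΨ : ∀ k, ψ ≤ Ψ k)
    (m : ℕ → ℕ) (hm : StrictMono m) (hm0 : m 0 = 0)
    (hwin : ∀ j : ℕ,
      0 ≤ ∑ k ∈ Finset.Icc (m j + 1) (m (j + 1)), Ψ k * ‖e k‖ ^ 2 ∧
      ∑ k ∈ Finset.Icc (m j + 1) (m (j + 1)), Ψ k * ‖e k‖ ^ 2
        ≤ ∑ k ∈ Finset.Icc (m j + 1) (m (j + 1)), (δ k + q k)) :
    (∀ n : ℕ, ∑ k ∈ Finset.Icc 1 n, Ψ k * ‖e k‖ ^ 2 ≤ M) ∧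
    Tendsto e atTop (nhds 0) ∧
    (∀ ε > (0 : ℝ), ∃ N : ℕ, ∀ k ≥ N,
      (¬ σ k → ‖d k‖ < ε) ∧ (σ k → ‖dhat k‖ < ε)) :=
  boosted_gradient_converges_to_zero_general M ψ hψ σ d dhat e he h δ q Ψ hstep hbd hΨ m hm hm0 hwin
end

section
/- Let ι be an index type with distinct elements i, j ∈ ι, and let B_i, B_j ⊆ ι be finite sets (neighbor sets) with i ∉ B_i and j ∉ B_j. Let V_i, V_j ⊆ ℝ² be measurable sets, let R, p_l : ℝ² → ℝ (for l ∈ ι) be measurable, and let φ : ℝ² → ℝ² be measurable. Assume: (a) φ(x) = 0 for every x ∉ V_i; (b) p_l(x) = 0 for every x ∈ V_i ∩ V_j and every l ∈ B_j with l ≠ i and l ∉ B_i ∩ B_j; and (c) the integrand below is integrable on V_j with respect to Lebesgue measure. Then ∫_{V_j} R(x)·p_j(x)·(∏_{l ∈ B_j \ {i}} (1 − p_l(x)))·φ(x) dx = ∫_{V_i ∩ V_j} R(x)·p_j(x)·(∏_{l ∈ B_i ∩ B_j} (1 − p_l(x)))·φ(x) dx. (Lemma 7 of the paper: the cross-gradient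 d_{ij} = ∂H_j(s̄_j)/∂s_i of the coverage objective can be computed locally by agent i.) -/
open MeasureTheory Finset

/-!
Off `V_i` both integrands vanish because `φ` does. On `V_i ∩ V_j` the two products agree: every
factor of `∏_{B_j \ {i}}` outside `B_i ∩ B_j` equals `1` by (b), and `B_i ∩ B_j ⊆ B_j \ {i}`
since `i ∉ B_i`. Hence the integrals over `V_j` agree, and the second one may be restricted to
`V_i ∩ V_j`.
-/

theorem Finset.prod_erase_eq_prod_inter {ι M : Type*} [DecidableEq ι] [CommMonoid M]
    {s t : Finset ι} {i : ι} (f : ι → M) (his : i ∉ s)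
    (hf : ∀ l ∈ t, l ≠ i → l ∉ s ∩ t → f l = 1) :
    ∏ l ∈ t.erase i, f l = ∏ l ∈ s ∩ t, f l := by
  refine (prod_subset (fun l hl => ?_) fun l hl hl' => ?_).symm
  · obtain ⟨hls, hlt⟩ := mem_inter.mp hl
    exact mem_erase.mpr ⟨ne_of_mem_of_not_mem hls his, hlt⟩
  · obtain ⟨hli, hlt⟩ := mem_erase.mp hl
    exact hf l hlt hli hl'

theorem MeasureTheory.setIntegral_inter_eq_of_forall_notMem_eq_zero {α E : Type*}
    [MeasurableSpace α] [NormedAddCommGroup E] [NormedSpace ℝ E] {μ : Measure α}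
    {s t : Set α} {f : α → E} (ht : MeasurableSet t) (hf : ∀ x ∉ s, f x = 0) :
    ∫ x in s ∩ t, f x ∂μ = ∫ x in t, f x ∂μ := by
  rw [← Measure.restrict_restrict' ht, setIntegral_eq_integral_of_forall_compl_eq_zero hf]

theorem cross_gradient_local_general {ι : Type*} [DecidableEq ι] (i j : ι)
    (Bi Bj : Finset ι) (hiBi : i ∉ Bi)
    (Vi Vj : Set (EuclideanSpace ℝ (Fin 2)))
    (hVj : MeasurableSet Vj)
    (R : EuclideanSpace ℝ (Fin 2) → ℝ)
    (p : ι → EuclideanSpace ℝ (Fin 2) → ℝ)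
    (φ : EuclideanSpace ℝ (Fin 2) → EuclideanSpace ℝ (Fin 2))
    (hφ0 : ∀ x ∉ Vi, φ x = 0)
    (hp0 : ∀ x ∈ Vi ∩ Vj, ∀ l ∈ Bj, l ≠ i → l ∉ Bi ∩ Bj → p l x = 0) :
    ∫ x in Vj, (R x * p j x * ∏ l ∈ Bj.erase i, (1 - p l x)) • φ x
      = ∫ x in Vi ∩ Vj, (R x * p j x * ∏ l ∈ Bi ∩ Bj, (1 - p l x)) • φ x := by
  have hlocal : ∀ x ∈ Vj, (R x * p j x * ∏ l ∈ Bj.erase i, (1 - p l x)) • φ x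
      = (R x * p j x * ∏ l ∈ Bi ∩ Bj, (1 - p l x)) • φ x := by
    intro x hxj
    by_cases hxi : x ∈ Vi
    · rw [prod_erase_eq_prod_inter _ hiBi fun l hl hli hl' => by
        rw [hp0 x ⟨hxi, hxj⟩ l hl hli hl', sub_zero]]
    · simp only [hφ0 x hxi, smul_zero]
  rw [setIntegral_congr_fun hVj hlocal,
    setIntegral_inter_eq_of_forall_notMem_eq_zero hVj fun x hx => by rw [hφ0 x hx, smul_zero]]

/-- Lemma 7 of the paper: the cross-gradient `d_{ij} = ∂H_j(s̄_j)/∂s_i` of the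
coverage objective can be computed locally by agent `i`. -/
theorem cross_gradient_local {ι : Type*} [DecidableEq ι] (i j : ι) (hij : i ≠ j)
    (Bi Bj : Finset ι) (hiBi : i ∉ Bi) (hjBj : j ∉ Bj)
    (Vi Vj : Set (EuclideanSpace ℝ (Fin 2)))
    (hVi : MeasurableSet Vi) (hVj : MeasurableSet Vj)
    (R : EuclideanSpace ℝ (Fin 2) → ℝ) (hR : Measurable R)
    (p : ι → EuclideanSpace ℝ (Fin 2) → ℝ) (hp : ∀ l, Measurable (p l))
    (φ : EuclideanSpace ℝ (Fin 2) → EuclideanSpace ℝ (Fin 2)) (hφ : Measurable φ)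
    (hφ0 : ∀ x ∉ Vi, φ x = 0)
    (hp0 : ∀ x ∈ Vi ∩ Vj, ∀ l ∈ Bj, l ≠ i → l ∉ Bi ∩ Bj → p l x = 0)
    (hint : IntegrableOn
      (fun x => (R x * p j x * ∏ l ∈ Bj.erase i, (1 - p l x)) • φ x) Vj volume) :
    ∫ x in Vj, (R x * p j x * ∏ l ∈ Bj.erase i, (1 - p l x)) • φ x
      = ∫ x in Vi ∩ Vj, (R x * p j x * ∏ l ∈ Bi ∩ Bj, (1 - p l x)) • φ x :=
  cross_gradient_local_general i j Bi Bj hiBi Vi Vj hVj R p φ hφ0 hp0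
end

section
/- Let ι be an index type, 𝒱 ⊆ ι a finite set of agents with i ∈ 𝒱, and B̄_i ⊆ 𝒱 with i ∈ B̄_i; write B_i = B̄_i \ {i}. Let F ⊆ ℝ² be measurable, V_i ⊆ F measurable, let R : ℝ² → ℝ be measurable, and for each l ∈ 𝒱 let p̂_l : ℝ² → ℝ be measurable. Assume: (a) p̂_i(x) = 0 for every x ∉ V_i; (b) p̂_l(x) = 0 for every x ∈ V_i and every l ∈ 𝒱 \ B̄_i; and (c) the integrands below are integrable on F with respect to Lebesgue measure. Then ∫_F R(x)·(1 − ∏_{l ∈ 𝒱} (1 − p̂_l(x))) dx = ∫_{V_i} R(x)·(∏_{l ∈ B_i} (1 − p̂_l(x)))·p̂_i(x) dx + ∫_F R(x)·(1 − ∏_{l ∈ 𝒱 \ {i}} (1 − p̂_l(x))) dx. (The separability decomposition H(s) = H_i(s̄_i) + H_i^c(s_i^c) of the coverage objective, equations (31)–(33) of the paper.) -/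
/-!
Pointwise, `1 - ∏_{𝒱} (1 - p̂_l) = p̂_i ∏_{𝒱 \ {i}} (1 - p̂_l) + (1 - ∏_{𝒱 \ {i}} (1 - p̂_l))`.
The first term vanishes off `V_i` because `p̂_i` does, and on `V_i` the non-neighbours contribute
factors `1`, so its product runs over `B_i` only; integrating over `F ⊇ V_i` gives the splitting.
-/

open MeasureTheory Finset

section DetectionAlgebra

variable {R ι : Type*} [CommRing R] (p : ι → R)

theorem one_sub_prod_one_sub_eq_mul_add [DecidableEq ι] {s : Finset ι} {i : ι} (hi : i ∈ s) :
    1 - ∏ l ∈ s, (1 - p l)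
      = p i * ∏ l ∈ s.erase i, (1 - p l) + (1 - ∏ l ∈ s.erase i, (1 - p l)) := by
  rw [← mul_prod_erase s _ hi]
  ring

theorem prod_one_sub_eq_of_subset_of_eq_zero {s t : Finset ι} (hts : t ⊆ s)
    (hzero : ∀ l ∈ s, l ∉ t → p l = 0) :
    ∏ l ∈ s, (1 - p l) = ∏ l ∈ t, (1 - p l) :=
  (prod_subset hts fun l hls hlt => by rw [hzero l hls hlt, sub_zero]).symm

end DetectionAlgebra

theorem setIntegral_indicator_add_of_subset {α E : Type*} [MeasurableSpace α]
    [NormedAddCommGroup E] [NormedSpace ℝ E] {μ : Measure α} {F V : Set α} {g h : α → E}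
    (hVF : V ⊆ F) (hV : MeasurableSet V) (hg : IntegrableOn g V μ) (hh : IntegrableOn h F μ) :
    ∫ x in F, (V.indicator g x + h x) ∂μ = (∫ x in V, g x ∂μ) + ∫ x in F, h x ∂μ := by
  have hgF : IntegrableOn (V.indicator g) F μ := (hg.integrable_indicator hV).integrableOn
  rw [integral_add hgF hh, setIntegral_indicator hV, Set.inter_eq_self_of_subset_right hVF]

theorem mul_one_sub_prod_eq_indicator_add {α ι : Type*} [DecidableEq ι] {𝒱 Bbar : Finset ι}
    {i : ι} (hi : i ∈ 𝒱) (hBsub : Bbar ⊆ 𝒱) {Vi : Set α} (R : α → ℝ) (phat : ι → α → ℝ)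
    (hpi0 : ∀ x ∉ Vi, phat i x = 0)
    (hnonnbr : ∀ x ∈ Vi, ∀ l ∈ 𝒱, l ∉ Bbar → phat l x = 0) (x : α) :
    R x * (1 - ∏ l ∈ 𝒱, (1 - phat l x))
      = Vi.indicator (fun y => R y * (∏ l ∈ Bbar.erase i, (1 - phat l y)) * phat i y) x
        + R x * (1 - ∏ l ∈ 𝒱.erase i, (1 - phat l x)) := by
  rw [one_sub_prod_one_sub_eq_mul_add (phat · x) hi]
  by_cases hx : x ∈ Vi
  · have hprod : ∏ l ∈ 𝒱.erase i, (1 - phat l x) = ∏ l ∈ Bbar.erase i, (1 - phat l x) :=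
      prod_one_sub_eq_of_subset_of_eq_zero (phat · x) (erase_subset_erase i hBsub)
        fun l hl hlB => hnonnbr x hx l (mem_of_mem_erase hl)
          fun hlBbar => hlB (mem_erase.mpr ⟨ne_of_mem_erase hl, hlBbar⟩)
    rw [Set.indicator_of_mem hx, hprod]
    ring
  · rw [Set.indicator_of_notMem hx, hpi0 x hx]
    ring

theorem coverage_objective_separable_general {ι : Type*} [DecidableEq ι]
    (𝒱 : Finset ι) (i : ι) (hi : i ∈ 𝒱)
    (Bbar : Finset ι) (hBsub : Bbar ⊆ 𝒱)
    (F Vi : Set (EuclideanSpace ℝ (Fin 2))) (hViF : Vi ⊆ F)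
    (hVi : MeasurableSet Vi)
    (R : EuclideanSpace ℝ (Fin 2) → ℝ)
    (phat : ι → EuclideanSpace ℝ (Fin 2) → ℝ)
    (hpi0 : ∀ x ∉ Vi, phat i x = 0)
    (hnonnbr : ∀ x ∈ Vi, ∀ l ∈ 𝒱, l ∉ Bbar → phat l x = 0)
    (hint2 : IntegrableOn
      (fun x => R x * (∏ l ∈ Bbar.erase i, (1 - phat l x)) * phat i x) Vi volume)
    (hint3 : IntegrableOn
      (fun x => R x * (1 - ∏ l ∈ 𝒱.erase i, (1 - phat l x))) F volume) :
    ∫ x in F, R x * (1 - ∏ l ∈ 𝒱, (1 - phat l x))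
      = (∫ x in Vi, R x * (∏ l ∈ Bbar.erase i, (1 - phat l x)) * phat i x)
        + ∫ x in F, R x * (1 - ∏ l ∈ 𝒱.erase i, (1 - phat l x)) := by
  simp_rw [mul_one_sub_prod_eq_indicator_add hi hBsub R phat hpi0 hnonnbr]
  exact setIntegral_indicator_add_of_subset hViF hVi hint2 hint3

/-- The separability decomposition `H(s) = H_i(s̄_i) + H_i^c(s_i^c)` of the
coverage objective, equations (31)–(33) of the paper. -/
theorem coverage_objective_separable {ι : Type*} [DecidableEq ι]
    (𝒱 : Finset ι) (i : ι) (hi : i ∈ 𝒱)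
    (Bbar : Finset ι) (hBsub : Bbar ⊆ 𝒱) (hiB : i ∈ Bbar)
    (F Vi : Set (EuclideanSpace ℝ (Fin 2))) (hViF : Vi ⊆ F)
    (hF : MeasurableSet F) (hVi : MeasurableSet Vi)
    (R : EuclideanSpace ℝ (Fin 2) → ℝ) (hR : Measurable R)
    (phat : ι → EuclideanSpace ℝ (Fin 2) → ℝ) (hphat : ∀ l, Measurable (phat l))
    (hpi0 : ∀ x ∉ Vi, phat i x = 0)
    (hnonnbr : ∀ x ∈ Vi, ∀ l ∈ 𝒱, l ∉ Bbar → phat l x = 0)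
    (hint1 : IntegrableOn
      (fun x => R x * (1 - ∏ l ∈ 𝒱, (1 - phat l x))) F volume)
    (hint2 : IntegrableOn
      (fun x => R x * (∏ l ∈ Bbar.erase i, (1 - phat l x)) * phat i x) Vi volume)
    (hint3 : IntegrableOn
      (fun x => R x * (1 - ∏ l ∈ 𝒱.erase i, (1 - phat l x))) F volume) :
    ∫ x in F, R x * (1 - ∏ l ∈ 𝒱, (1 - phat l x))
      = (∫ x in Vi, R x * (∏ l ∈ Bbar.erase i, (1 - phat l x)) * phat i x)
        + ∫ x in F, R x * (1 - ∏ l ∈ 𝒱.erase i, (1 - phat l x)) :=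
  coverage_objective_separable_general 𝒱 i hi Bbar hBsub F Vi hViF hVi R phat hpi0 hnonnbr hint2
    hint3
end
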